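/- arXiv:0907.3282 — 3 statements merged into one kernel-verified Lean document; each statement's English description precedes it below -/
import Mathlib

section
/- Let α > 0, μ̃ > 0, t ∈ (0,1] and φ ≥ 0 satisfy φ ≤ √(μ̃/α)·t. Then the supremum, over all deterministic admissible strategies ζ on [0,t] with initial holdings φ, of ∫₀ᵗ ζ(r)·exp(−μ̃·r − α·∫₀ʳ ζ(v)² dv) dr is equal to (1 − e^{−2√(α·μ̃)·φ})/(2√(α·μ̃)), and it is attained by the strategy ζ(r) = √(μ̃/α)·1_{[0, φ·√(α/μ̃)]}(r). (This is case (ii) of the log-quadratic impact problem, where g(ζ) = α·ζ².) -/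
/-!
By AM-GM, `2 √(αμ) ζ ≤ μ + α ζ²`, so the exponent `μ r + α ∫₀ʳ ζ²` dominates `2 √(αμ) F(r)`,
where `F(r) = ∫₀ʳ ζ`. Since `F` is absolutely continuous, `c ∫₀ᵗ ζ e^{-c F} = 1 - e^{-c F(t)}`
exactly, and this increases with `F(t) ≤ φ`. Selling at the constant rate `√(μ/α)` makes AM-GM an
equality while trading, and liquidates exactly `φ` by time `φ √(α/μ) ≤ t`.
-/

open MeasureTheory Set Filter

theorem LipschitzOnWith.comp_absolutelyContinuousOnInterval {f : ℝ → ℝ} {g : ℝ → ℝ}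
    {s : Set ℝ} {K : NNReal} {a b : ℝ} (hg : LipschitzOnWith K g s)
    (hf : AbsolutelyContinuousOnInterval f a b) (hfs : MapsTo f (uIcc a b) s) :
    AbsolutelyContinuousOnInterval (fun x ↦ g (f x)) a b := by
  refine squeeze_zero' (Eventually.of_forall fun _ ↦ Finset.sum_nonneg fun _ _ ↦ dist_nonneg)
    ?_ (by simpa using Tendsto.const_mul (K : ℝ) hf)
  filter_upwards [mem_inf_of_right (mem_principal_self _)] with E hE
  rw [Finset.mul_sum]
  exact Finset.sum_le_sum fun i hi ↦
    hg.dist_le_mul _ (hfs (hE.1 i hi).1) _ (hfs (hE.1 i hi).2)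

theorem AbsolutelyContinuousOnInterval.comp_contDiff {f g : ℝ → ℝ} {a b : ℝ}
    (hg : ContDiff ℝ 1 g) (hf : AbsolutelyContinuousOnInterval f a b) :
    AbsolutelyContinuousOnInterval (fun x ↦ g (f x)) a b := by
  obtain ⟨C, hC⟩ := hf.exists_bound
  obtain ⟨K, hK⟩ := hg.contDiffOn.exists_lipschitzOnWith one_ne_zero (convex_Icc (-C) C)
    isCompact_Icc
  exact hK.comp_absolutelyContinuousOnInterval hf fun x hx ↦ abs_le.mp (hC x hx)

theorem integral_mul_exp_neg_mul_integral {h : ℝ → ℝ} {a b : ℝ} (c : ℝ)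
    (hh : IntervalIntegrable h volume a b) :
    c * ∫ x in a..b, h x * Real.exp (-(c * ∫ v in a..x, h v)) =
      1 - Real.exp (-(c * ∫ v in a..b, h v)) := by
  have hE : AbsolutelyContinuousOnInterval
      (fun x ↦ Real.exp (-(c * ∫ v in a..x, h v))) a b :=
    ((hh.absolutelyContinuousOnInterval_intervalIntegral left_mem_uIcc).const_mul c).fun_neg
      |>.comp_contDiff Real.contDiff_exp
  have hderiv : ∀ᵐ x, x ∈ uIoc a b → deriv (fun x ↦ Real.exp (-(c * ∫ v in a..x, h v))) x =
      -(c * (h x * Real.exp (-(c * ∫ v in a..x, h v)))) := by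
    filter_upwards [hh.ae_hasDerivAt_integral] with x hx hxab
    rw [(((hx (uIoc_subset_uIcc hxab) a left_mem_uIcc).const_mul c).fun_neg.exp).deriv]
    ring
  have := hE.integral_deriv_eq_sub
  rw [intervalIntegral.integral_congr_ae hderiv, intervalIntegral.integral_neg,
    intervalIntegral.integral_const_mul] at this
  simp only [intervalIntegral.integral_same, mul_zero, neg_zero, Real.exp_zero] at this
  linarith

theorem integral_indicator_Icc_const {s r : ℝ} (k : ℝ) (hs : 0 ≤ s) (hr : 0 ≤ r) :
    ∫ v in (0 : ℝ)..r, (Icc 0 s).indicator (fun _ ↦ k) v = k * min r s := by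
  have hset : Ioc 0 r ∩ Icc 0 s = Ioc 0 (min r s) := by
    ext x
    simp only [mem_inter_iff, mem_Ioc, mem_Icc, le_min_iff]
    grind
  rw [intervalIntegral.integral_of_le hr, setIntegral_indicator measurableSet_Icc, hset,
    setIntegral_const, smul_eq_mul, Real.volume_real_Ioc_of_le (le_min hr hs)]
  ring

theorem IntervalIntegrable.of_nonneg_of_le {f : ℝ → ℝ} {a b M : ℝ} (hab : a ≤ b)
    (hf : Measurable f) (hf0 : ∀ x ∈ Icc a b, 0 ≤ f x) (hfM : ∀ x ∈ Icc a b, f x ≤ M) :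
    IntervalIntegrable f volume a b :=
  (intervalIntegrable_iff_integrableOn_Icc_of_le hab).2 <|
    IntegrableOn.of_bound measure_Icc_lt_top hf.aestronglyMeasurable M <|
      ae_restrict_of_forall_mem measurableSet_Icc fun x hx ↦ by
        rw [Real.norm_of_nonneg (hf0 x hx)]
        exact hfM x hx

theorem two_mul_sqrt_mul_mul_le {α μ : ℝ} (hα : 0 ≤ α) (hμ : 0 ≤ μ) (z : ℝ) :
    2 * √(α * μ) * z ≤ μ + α * z ^ 2 := by
  have := two_mul_le_add_sq (√α * z) √μ
  rw [mul_pow, Real.sq_sqrt hα, Real.sq_sqrt hμ] at this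
  rw [Real.sqrt_mul hα]
  linarith

noncomputable def discountedProceeds (μ α t : ℝ) (ζ : ℝ → ℝ) : ℝ :=
  ∫ r in (0 : ℝ)..t, ζ r * Real.exp (-μ * r - α * ∫ v in (0 : ℝ)..r, ζ v ^ 2)

theorem discountedProceeds_le_integral_mul_exp {μ α t : ℝ} {ξ : ℝ → ℝ} (hμ : 0 ≤ μ)
    (hα : 0 ≤ α) (ht : 0 ≤ t) (hξ : IntervalIntegrable ξ volume 0 t)
    (hξ2 : IntervalIntegrable (fun r ↦ ξ r ^ 2) volume 0 t) (hξ0 : ∀ r ∈ Icc 0 t, 0 ≤ ξ r) :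
    discountedProceeds μ α t ξ ≤
      ∫ r in (0 : ℝ)..t, ξ r * Real.exp (-(2 * √(α * μ) * ∫ v in (0 : ℝ)..r, ξ v)) := by
  have hsub : ∀ r ∈ Icc 0 t, uIcc 0 r ⊆ uIcc 0 t := fun r hr ↦
    uIcc_subset_uIcc left_mem_uIcc (by rwa [uIcc_of_le ht])
  have hexponent : ∀ r ∈ Icc 0 t,
      2 * √(α * μ) * ∫ v in (0 : ℝ)..r, ξ v ≤ μ * r + α * ∫ v in (0 : ℝ)..r, ξ v ^ 2 := by
    intro r hr
    have := intervalIntegral.integral_mono_on hr.1 ((hξ.mono_set (hsub r hr)).const_mul _)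
      (intervalIntegrable_const.add ((hξ2.mono_set (hsub r hr)).const_mul α))
      fun v _ ↦ two_mul_sqrt_mul_mul_le hα hμ (ξ v)
    rwa [intervalIntegral.integral_const_mul, intervalIntegral.integral_add intervalIntegrable_const
      ((hξ2.mono_set (hsub r hr)).const_mul α), intervalIntegral.integral_const,
      intervalIntegral.integral_const_mul, sub_zero, smul_eq_mul, mul_comm r] at this
  have hF := intervalIntegral.continuousOn_primitive_interval' hξ left_mem_uIcc
  have hQ := intervalIntegral.continuousOn_primitive_interval' hξ2 left_mem_uIcc
  refine intervalIntegral.integral_mono_on ht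
    (hξ.mul_continuousOn (by fun_prop)) (hξ.mul_continuousOn (by fun_prop)) fun r hr ↦ ?_
  gcongr
  · exact hξ0 r hr
  · linarith [hexponent r hr]

theorem discountedProceeds_le {μ α t φ : ℝ} {ξ : ℝ → ℝ} (hμ : 0 < μ) (hα : 0 < α)
    (ht : 0 ≤ t) (hξ : IntervalIntegrable ξ volume 0 t)
    (hξ2 : IntervalIntegrable (fun r ↦ ξ r ^ 2) volume 0 t) (hξ0 : ∀ r ∈ Icc 0 t, 0 ≤ ξ r)
    (hξφ : ∫ r in (0 : ℝ)..t, ξ r ≤ φ) :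
    discountedProceeds μ α t ξ ≤
      (1 - Real.exp (-2 * √(α * μ) * φ)) / (2 * √(α * μ)) := by
  have hc : 0 < 2 * √(α * μ) := by positivity
  calc discountedProceeds μ α t ξ
      ≤ ∫ r in (0 : ℝ)..t, ξ r * Real.exp (-(2 * √(α * μ) * ∫ v in (0 : ℝ)..r, ξ v)) :=
        discountedProceeds_le_integral_mul_exp hμ.le hα.le ht hξ hξ2 hξ0
    _ = (1 - Real.exp (-(2 * √(α * μ) * ∫ r in (0 : ℝ)..t, ξ r))) / (2 * √(α * μ)) := by
        rw [eq_div_iff hc.ne', mul_comm, integral_mul_exp_neg_mul_integral _ hξ]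
    _ ≤ (1 - Real.exp (-2 * √(α * μ) * φ)) / (2 * √(α * μ)) := by
        gcongr
        linarith [mul_le_mul_of_nonneg_left hξφ hc.le]

theorem discountedProceeds_indicator_Icc_eq_integral_mul_exp {μ α t s : ℝ} (hμ : 0 ≤ μ)
    (hα : 0 < α) (hs : 0 ≤ s) :
    discountedProceeds μ α t ((Icc 0 s).indicator fun _ ↦ √(μ / α)) =
      ∫ r in (0 : ℝ)..t, (Icc 0 s).indicator (fun _ ↦ √(μ / α)) r *
        Real.exp (-(2 * √(α * μ) *
          ∫ v in (0 : ℝ)..r, (Icc 0 s).indicator (fun _ ↦ √(μ / α)) v)) := by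
  have hrate : √(α * μ) * √(μ / α) = μ := by
    rw [← Real.sqrt_mul (by positivity), show α * μ * (μ / α) = μ ^ 2 by field_simp,
      Real.sqrt_sq hμ]
  have hsq : ∀ v, (Icc 0 s).indicator (fun _ ↦ √(μ / α)) v ^ 2 =
      (Icc 0 s).indicator (fun _ ↦ μ / α) v := fun v ↦ by
    by_cases hv : v ∈ Icc 0 s <;> simp [hv, Real.sq_sqrt (div_nonneg hμ hα.le)]
  refine intervalIntegral.integral_congr fun r _ ↦ ?_
  by_cases hr : r ∈ Icc 0 s
  · simp only [hsq, integral_indicator_Icc_const _ hs hr.1, min_eq_left hr.2,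
      indicator_of_mem hr]
    congr 2
    linear_combination (-r) * mul_div_cancel₀ μ hα.ne' + (2 * r) * hrate
  · simp [indicator_of_notMem hr]

/-- case (ii) of the log-quadratic impact problem `g(ζ) = α ζ²`:
if `φ ≤ √(μ/α) t`, the supremum over deterministic admissible strategies of the
discounted proceeds equals `(1 - e^{-2 √(α μ) φ}) / (2 √(α μ))`, and it is attained
by the strategy `ζ(r) = √(μ/α) · 1_{[0, φ √(α/μ)]}(r)`. -/
theorem logQuadratic_value_case_ii (α μ t φ : ℝ) (hα : 0 < α) (hμ : 0 < μ)
    (ht : t ∈ Set.Ioc (0 : ℝ) 1) (hφ : 0 ≤ φ)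
    (hcond : φ ≤ Real.sqrt (μ / α) * t) :
    sSup {y : ℝ | ∃ ζ : ℝ → ℝ, Measurable ζ ∧
        (∃ M : ℝ, ∀ r ∈ Set.Icc (0 : ℝ) t, ζ r ≤ M) ∧
        (∀ r ∈ Set.Icc (0 : ℝ) t, 0 ≤ ζ r) ∧
        (∫ r in (0 : ℝ)..t, ζ r) ≤ φ ∧
        y = ∫ r in (0 : ℝ)..t,
              ζ r * Real.exp (-μ * r - α * ∫ v in (0 : ℝ)..r, ζ v ^ 2)}
      = (1 - Real.exp (-2 * Real.sqrt (α * μ) * φ)) / (2 * Real.sqrt (α * μ)) ∧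
    (∫ r in (0 : ℝ)..t,
        (Set.indicator (Set.Icc 0 (φ * Real.sqrt (α / μ)))
            (fun _ => Real.sqrt (μ / α)) r) *
          Real.exp (-μ * r - α * ∫ v in (0 : ℝ)..r,
            (Set.indicator (Set.Icc 0 (φ * Real.sqrt (α / μ)))
                (fun _ => Real.sqrt (μ / α)) v) ^ 2))
      = (1 - Real.exp (-2 * Real.sqrt (α * μ) * φ)) / (2 * Real.sqrt (α * μ)) := by
  have ht0 : 0 ≤ t := ht.1.le
  set s := φ * √(α / μ)
  set ζ := (Icc 0 s).indicator fun _ ↦ √(μ / α)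
  have hroot : √(μ / α) * √(α / μ) = 1 := by
    rw [← Real.sqrt_mul (by positivity), div_mul_div_comm, mul_comm μ,
      div_self (by positivity), Real.sqrt_one]
  have hs : 0 ≤ s := by positivity
  have hst : s ≤ t := by
    calc s ≤ √(μ / α) * t * √(α / μ) := mul_le_mul_of_nonneg_right hcond (Real.sqrt_nonneg _)
      _ = t := by rw [mul_right_comm, hroot, one_mul]
  have hζ0 : ∀ r, 0 ≤ ζ r := fun r ↦ indicator_nonneg (fun _ _ ↦ Real.sqrt_nonneg _) r
  have hζk : ∀ r, ζ r ≤ √(μ / α) := fun r ↦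
    indicator_le_self' (fun _ _ ↦ Real.sqrt_nonneg _) r
  have hζ : IntervalIntegrable ζ volume 0 t := .of_nonneg_of_le ht0
    (measurable_const.indicator measurableSet_Icc) (fun r _ ↦ hζ0 r) (fun r _ ↦ hζk r)
  have hζφ : ∫ r in (0 : ℝ)..t, ζ r = φ := by
    rw [integral_indicator_Icc_const _ hs ht0, min_eq_right hst, ← mul_assoc,
      mul_comm √(μ / α), mul_assoc, hroot, mul_one]
  have hvalue : discountedProceeds μ α t ζ =
      (1 - Real.exp (-2 * √(α * μ) * φ)) / (2 * √(α * μ)) := by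
    rw [discountedProceeds_indicator_Icc_eq_integral_mul_exp hμ.le hα hs,
      eq_div_iff (by positivity), mul_comm, integral_mul_exp_neg_mul_integral _ hζ, hζφ,
      neg_mul, neg_mul]
  refine ⟨IsGreatest.csSup_eq ⟨⟨ζ, measurable_const.indicator measurableSet_Icc,
    ⟨_, fun r _ ↦ hζk r⟩, fun r _ ↦ hζ0 r, hζφ.le, hvalue.symm⟩, ?_⟩, hvalue⟩
  rintro _ ⟨ξ, hξm, ⟨M, hM⟩, hξ0, hξφ, rfl⟩
  exact discountedProceeds_le hμ hα ht0 (.of_nonneg_of_le ht0 hξm hξ0 hM)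
    (.of_nonneg_of_le ht0 (hξm.pow_const 2) (fun _ _ ↦ sq_nonneg _)
      fun r hr ↦ pow_le_pow_left₀ (hξ0 r hr) (hM r hr) 2) hξ0 hξφ
end

section
/- Let α > 0, μ̃ > 0 and t > 0, and define ζ̂ : [0,t) → [0,∞) by ζ̂(r) = √( μ̃ / (α·(1 − e^{−2μ̃(t−r)})) ). Then ∫₀ᵗ ζ̂(r)·exp(−μ̃·r − α·∫₀ʳ ζ̂(v)² dv) dr = √(1 − e^{−2μ̃t})/(2√(α·μ̃)). -/
/-!
Write `D(r) = 1 - e^{-2μ(t-r)}`. Since `α ζ̂² = μ / D` and `v ↦ μ v - ½ log D(v)` is an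
antiderivative of `μ / D`, the accumulated impact is `α ∫₀ʳ ζ̂² = μ r - ½ log (D(r) / D(0))`.
Hence `exp (-μ r - α ∫₀ʳ ζ̂²) = e^{-2μr} √(D(r) / D(0))`, and the factor `√D(r)` cancels the
singularity of `ζ̂(r) = √(μ / (α D(r)))`: the integrand is `√(μ / (α D(0))) e^{-2μr}` on `[0, t)`,
which integrates to `√(μ / (α D(0))) · D(0) / (2μ) = √D(0) / (2 √(αμ))`.
-/

open MeasureTheory Real

lemma one_sub_exp_neg_two_mul_pos {μ s : ℝ} (hμ : 0 < μ) (hs : 0 < s) :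
    0 < 1 - exp (-2 * μ * s) := by
  have : -2 * μ * s < 0 := by nlinarith
  linarith [exp_lt_one_iff.mpr this]

lemma one_sub_exp_neg_two_mul_sub_pos_of_mem_uIcc {μ t r v : ℝ} (hμ : 0 < μ) (hr : 0 ≤ r)
    (hrt : r < t) (hv : v ∈ Set.uIcc 0 r) : 0 < 1 - exp (-2 * μ * (t - v)) := by
  rw [Set.uIcc_of_le hr] at hv
  exact one_sub_exp_neg_two_mul_pos hμ (by linarith [hv.2])

lemma hasDerivAt_mul_sub_log_one_sub_exp_div_two {μ t v : ℝ}
    (hv : 1 - exp (-2 * μ * (t - v)) ≠ 0) :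
    HasDerivAt (fun w => μ * w - log (1 - exp (-2 * μ * (t - w))) / 2)
      (μ / (1 - exp (-2 * μ * (t - v)))) v := by
  have hD := ((((hasDerivAt_id' v).const_sub t).const_mul (-2 * μ)).exp).const_sub 1
  refine (((hasDerivAt_id' v).const_mul μ).sub ((hD.log hv).div_const 2)).congr_deriv ?_
  generalize exp (-2 * μ * (t - v)) = E at hv ⊢
  field_simp
  ring

lemma integral_div_one_sub_exp_neg_two_mul_sub {μ t r : ℝ} (hμ : 0 < μ) (hr : 0 ≤ r)
    (hrt : r < t) :
    ∫ v in (0 : ℝ)..r, μ / (1 - exp (-2 * μ * (t - v)))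
      = μ * r - log (1 - exp (-2 * μ * (t - r))) / 2 + log (1 - exp (-2 * μ * t)) / 2 := by
  have hD (v) (hv : v ∈ Set.uIcc 0 r) := one_sub_exp_neg_two_mul_sub_pos_of_mem_uIcc hμ hr hrt hv
  rw [intervalIntegral.integral_eq_sub_of_hasDerivAt
    (fun v hv => hasDerivAt_mul_sub_log_one_sub_exp_div_two (hD v hv).ne')
    (ContinuousOn.intervalIntegrable
      (continuousOn_const.div (by fun_prop) fun v hv => (hD v hv).ne'))]
  simp only [mul_zero, sub_zero, zero_sub]
  ring

lemma integral_exp_neg_two_mul {μ : ℝ} (hμ : μ ≠ 0) (t : ℝ) :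
    ∫ r in (0 : ℝ)..t, exp (-2 * μ * r) = (1 - exp (-2 * μ * t)) / (2 * μ) := by
  rw [intervalIntegral.integral_comp_mul_left (fun x => exp x) (by simpa using hμ), integral_exp,
    mul_zero, exp_zero, smul_eq_mul]
  field_simp
  ring

lemma mul_integral_sqrt_div_sq {α μ t r : ℝ} (hα : 0 < α) (hμ : 0 < μ) (hr : 0 ≤ r)
    (hrt : r < t) :
    α * ∫ v in (0 : ℝ)..r, √(μ / (α * (1 - exp (-2 * μ * (t - v))))) ^ 2
      = μ * r - log (1 - exp (-2 * μ * (t - r))) / 2 + log (1 - exp (-2 * μ * t)) / 2 := by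
  rw [← integral_div_one_sub_exp_neg_two_mul_sub hμ hr hrt,
    ← intervalIntegral.integral_const_mul]
  refine intervalIntegral.integral_congr fun v hv => ?_
  have hD := one_sub_exp_neg_two_mul_sub_pos_of_mem_uIcc hμ hr hrt hv
  rw [sq_sqrt (by positivity)]
  field_simp

lemma candidate_integrand_eq {α μ t r : ℝ} (hα : 0 < α) (hμ : 0 < μ) (hr : 0 ≤ r)
    (hrt : r < t) :
    √(μ / (α * (1 - exp (-2 * μ * (t - r))))) *
        exp (-μ * r - α * ∫ v in (0 : ℝ)..r, √(μ / (α * (1 - exp (-2 * μ * (t - v))))) ^ 2)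
      = √(μ / (α * (1 - exp (-2 * μ * t)))) * exp (-2 * μ * r) := by
  have hDr := one_sub_exp_neg_two_mul_pos hμ (sub_pos.2 hrt)
  have hD0 := one_sub_exp_neg_two_mul_pos hμ (hr.trans_lt hrt)
  have hexp : exp (-μ * r - α * ∫ v in (0 : ℝ)..r,
        √(μ / (α * (1 - exp (-2 * μ * (t - v))))) ^ 2)
      = √((1 - exp (-2 * μ * (t - r))) / (1 - exp (-2 * μ * t))) * exp (-2 * μ * r) := by
    rw [mul_integral_sqrt_div_sq hα hμ hr hrt, ← exp_log (div_pos hDr hD0), ← exp_half,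
      ← exp_add, log_div hDr.ne' hD0.ne']
    ring_nf
  rw [hexp, ← mul_assoc, ← sqrt_mul (by positivity)]
  congr 2
  generalize 1 - exp (-2 * μ * (t - r)) = Dr at hDr ⊢
  field_simp

lemma sqrt_div_mul_div_two_mul {α μ D : ℝ} (hα : 0 < α) (hμ : 0 < μ) (hD : 0 < D) :
    √(μ / (α * D)) * (D / (2 * μ)) = √D / (2 * √(α * μ)) := by
  have := sqrt_pos.2 hμ
  have := sqrt_pos.2 hD
  have := sqrt_pos.2 hα
  rw [sqrt_div hμ.le, sqrt_mul hα.le, sqrt_mul hα.le]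
  field_simp
  rw [sq_sqrt hμ.le, sq_sqrt hD.le, mul_comm]

/-- verification computation for the candidate optimal strategy
`ζ̂(r) = √( μ / (α (1 - e^{-2 μ (t-r)})) )` in case (i) of the log-quadratic
market impact problem: its discounted proceeds equal
`√(1 - e^{-2 μ t}) / (2 √(α μ))`. -/
theorem logQuadratic_candidate_proceeds_case_i (α μ t : ℝ)
    (hα : 0 < α) (hμ : 0 < μ) (ht : 0 < t) :
    (∫ r in (0 : ℝ)..t,
        Real.sqrt (μ / (α * (1 - Real.exp (-2 * μ * (t - r))))) *
          Real.exp (-μ * r - α * ∫ v in (0 : ℝ)..r,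
            Real.sqrt (μ / (α * (1 - Real.exp (-2 * μ * (t - v))))) ^ 2))
      = Real.sqrt (1 - Real.exp (-2 * μ * t)) / (2 * Real.sqrt (α * μ)) := by
  rw [intervalIntegral.integral_of_le ht.le, integral_Ioc_eq_integral_Ioo,
    setIntegral_congr_fun measurableSet_Ioo
      fun r hr => candidate_integrand_eq hα hμ hr.1.le hr.2,
    ← integral_Ioc_eq_integral_Ioo, ← intervalIntegral.integral_of_le ht.le,
    intervalIntegral.integral_const_mul, integral_exp_neg_two_mul hμ.ne']
  exact sqrt_div_mul_div_two_mul hα hμ (one_sub_exp_neg_two_mul_pos hμ ht)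
end

section
/- Let α > 0, μ̃ > 0 and t > 0. Then ∫₀ᵗ √( μ̃ / (α·(1 − e^{−2μ̃(t−r)})) ) dr = arctanh(√(1 − e^{−2μ̃t}))/√(α·μ̃) (an improper but finite integral). -/
/-!
After the substitution `u = t - r` the integrand is `(μ / √(1 - e^{-2μu})) / √(αμ)`, the
derivative of `arctanh √(1 - e^{-2μu}) / √(αμ)`. This antiderivative is continuous on `[0, t]`
and vanishes at `0`; since the integrand is nonnegative it is integrable despite its
singularity at `u = 0`, and the fundamental theorem of calculus gives the value.
-/

/-- The inverse hyperbolic tangent, `arctanh x = (1/2) log ((1+x)/(1-x))`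
(Mathlib has no `arctanh`, so we define it). -/
noncomputable def Real.arctanh (x : ℝ) : ℝ := (1 / 2) * Real.log ((1 + x) / (1 - x))

open Real Set MeasureTheory intervalIntegral

namespace Real

theorem arctanh_zero : arctanh 0 = 0 := by simp [arctanh]

theorem hasDerivAt_arctanh {x : ℝ} (hx : x ∈ Ioo (-1) 1) :
    HasDerivAt arctanh (1 - x ^ 2)⁻¹ x := by
  have hp : 1 + x ≠ 0 := by linarith [hx.1]
  have hm : 1 - x ≠ 0 := by linarith [hx.2]
  have hx2 : 1 - x ^ 2 ≠ 0 := by nlinarith [hx.1, hx.2]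
  have hq := ((hasDerivAt_id' x).const_add 1).div ((hasDerivAt_id' x).const_sub 1) hm
  refine ((hq.log (div_ne_zero hp hm)).const_mul (1 / 2)).congr_deriv ?_
  simp only [Pi.div_apply]
  field_simp
  ring

theorem continuousOn_arctanh : ContinuousOn arctanh (Ioo (-1) 1) :=
  fun _ hx => (hasDerivAt_arctanh hx).continuousAt.continuousWithinAt

theorem sqrt_one_sub_exp_mem_Ioo (x : ℝ) : √(1 - exp x) ∈ Ioo (-1) 1 :=
  ⟨by linarith [sqrt_nonneg (1 - exp x)],
    (sqrt_lt' one_pos).mpr (by linarith [exp_pos x])⟩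

theorem continuous_arctanh_sqrt_one_sub_exp {f : ℝ → ℝ} (hf : Continuous f) :
    Continuous fun u => arctanh √(1 - exp (f u)) :=
  continuousOn_arctanh.comp_continuous (by fun_prop) fun u => sqrt_one_sub_exp_mem_Ioo (f u)

/-- Since `arctanh' = 1 / (1 - x ^ 2)` and `1 - (√(1 - e)) ^ 2 = e`, the exponential cancels. -/
theorem hasDerivAt_arctanh_sqrt_one_sub_exp {μ u : ℝ} (hμu : 0 < μ * u) :
    HasDerivAt (fun u => arctanh √(1 - exp (-2 * μ * u))) (μ / √(1 - exp (-2 * μ * u))) u := by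
  have hpos : 0 < 1 - exp (-2 * μ * u) := sub_pos.mpr (exp_lt_one_iff.mpr (by linarith))
  have hsq : √(1 - exp (-2 * μ * u)) ^ 2 = 1 - exp (-2 * μ * u) := sq_sqrt hpos.le
  have hinner := (((hasDerivAt_id' u).const_mul (-2 * μ)).exp).const_sub 1
  refine ((hasDerivAt_arctanh (sqrt_one_sub_exp_mem_Ioo _)).comp u
    (hinner.sqrt hpos.ne')).congr_deriv ?_
  rw [hsq]
  field_simp [(exp_pos (-2 * μ * u)).ne', (sqrt_pos.mpr hpos).ne']
  ring

theorem sqrt_div_mul_eq_div_sqrt_div_sqrt {α μ : ℝ} (hα : 0 ≤ α) (hμ : 0 ≤ μ) (x : ℝ) :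
    √(μ / (α * x)) = μ / √x / √(α * μ) := by
  rw [sqrt_div hμ, sqrt_mul hα, sqrt_mul hα]
  rcases hμ.eq_or_lt with rfl | hμ
  · simp
  · have := sqrt_pos.mpr hμ
    field_simp
    rw [sq_sqrt hμ.le]

end Real

/-- the total amount sold by the candidate optimal strategy
`ζ̂(r) = √( μ / (α (1 - e^{-2 μ (t-r)})) )` in case (i) of the log-quadratic
market impact problem:
`∫₀ᵗ ζ̂(r) dr = arctanh (√(1 - e^{-2 μ t})) / √(α μ)`. -/
theorem logQuadratic_candidate_total_sales_case_i (α μ t : ℝ)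
    (hα : 0 < α) (hμ : 0 < μ) (ht : 0 < t) :
    (∫ r in (0 : ℝ)..t,
        Real.sqrt (μ / (α * (1 - Real.exp (-2 * μ * (t - r))))))
      = Real.arctanh (Real.sqrt (1 - Real.exp (-2 * μ * t))) / Real.sqrt (α * μ) := by
  set F : ℝ → ℝ := fun u => arctanh √(1 - exp (-2 * μ * u)) / √(α * μ)
  set ζ : ℝ → ℝ := fun u => √(μ / (α * (1 - exp (-2 * μ * u))))
  have hF_cont : Continuous F :=
    (continuous_arctanh_sqrt_one_sub_exp (by fun_prop)).div_const _
  have hF_deriv : ∀ u ∈ Ioo 0 t, HasDerivAt F (ζ u) u := fun u hu => by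
    simp only [ζ, sqrt_div_mul_eq_div_sqrt_div_sqrt hα.le hμ.le]
    exact (hasDerivAt_arctanh_sqrt_one_sub_exp (mul_pos hμ hu.1)).div_const _
  have hζ_int : IntervalIntegrable ζ volume 0 t :=
    intervalIntegrable_deriv_of_nonneg hF_cont.continuousOn
      (by rwa [min_eq_left ht.le, max_eq_right ht.le]) fun _ _ => sqrt_nonneg _
  calc ∫ r in (0 : ℝ)..t, ζ (t - r)
      = ∫ u in (0 : ℝ)..t, ζ u := by simp [integral_comp_sub_left ζ t]
    _ = F t - F 0 := integral_eq_sub_of_hasDerivAt_of_le ht.le hF_cont.continuousOn hF_deriv hζ_int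
    _ = _ := by simp [F, arctanh_zero]
end
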